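/- arXiv:2501.10745 — 4 statements merged into one kernel-verified Lean document; each statement's English description precedes it below -/
import Mathlib

section
/- Let M : ℝ → ℝ^{n×n}, λ : ℝ → ℝ and y : ℝ → ℝⁿ be differentiable at t₀, with M(t)y(t) = λ(t)y(t) for all t in a neighborhood of t₀ and y(t₀) ≠ 0. Let x ∈ ℝⁿ satisfy xᵀM(t₀) = λ(t₀)xᵀ and xᵀy(t₀) ≠ 0. Then λ'(t₀) = ( xᵀ M'(t₀) y(t₀) ) / ( xᵀ y(t₀) ). -/
open Matrix Filter

/-!
Pair the eigenvalue equation `M(t) y(t) = λ(t) y(t)` with the fixed vector `x` and differentiate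
`xᵀ M(t) y(t) = λ(t) xᵀ y(t)` at `t₀`. The terms containing `y'(t₀)` are `xᵀ M(t₀) y'(t₀)` and
`λ(t₀) xᵀ y'(t₀)`, which agree because `x` is a left eigenvector; what remains is
`xᵀ M'(t₀) y(t₀) = λ'(t₀) xᵀ y(t₀)`.
-/

section EntrywiseDeriv

variable {𝕜 ι : Type*} [NontriviallyNormedField 𝕜] [Fintype ι]

theorem hasDerivAt_dotProduct {u v : 𝕜 → ι → 𝕜} {u' v' : ι → 𝕜} {t₀ : 𝕜}
    (hu : ∀ i, HasDerivAt (fun t => u t i) (u' i) t₀)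
    (hv : ∀ i, HasDerivAt (fun t => v t i) (v' i) t₀) :
    HasDerivAt (fun t => u t ⬝ᵥ v t) (u' ⬝ᵥ v t₀ + u t₀ ⬝ᵥ v') t₀ := by
  simp only [dotProduct, ← Finset.sum_add_distrib]
  exact HasDerivAt.fun_sum fun i _ => (hu i).mul (hv i)

theorem hasDerivAt_mulVec_apply {M : 𝕜 → Matrix ι ι 𝕜} {M' : Matrix ι ι 𝕜}
    {y : 𝕜 → ι → 𝕜} {y' : ι → 𝕜} {t₀ : 𝕜}
    (hM : ∀ i j, HasDerivAt (fun t => M t i j) (M' i j) t₀)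
    (hy : ∀ i, HasDerivAt (fun t => y t i) (y' i) t₀) (i : ι) :
    HasDerivAt (fun t => (M t *ᵥ y t) i) ((M' *ᵥ y t₀ + M t₀ *ᵥ y') i) t₀ :=
  hasDerivAt_dotProduct (hM i) hy

theorem hasDerivAt_const_dotProduct {v : 𝕜 → ι → 𝕜} {v' : ι → 𝕜} {t₀ : 𝕜} (x : ι → 𝕜)
    (hv : ∀ i, HasDerivAt (fun t => v t i) (v' i) t₀) :
    HasDerivAt (fun t => x ⬝ᵥ v t) (x ⬝ᵥ v') t₀ := by
  simpa using hasDerivAt_dotProduct (fun i => hasDerivAt_const t₀ (x i)) hv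

end EntrywiseDeriv

theorem eigenvalue_deriv_mul_dotProduct {𝕜 ι : Type*} [NontriviallyNormedField 𝕜] [Fintype ι]
    {M : 𝕜 → Matrix ι ι 𝕜} {M' : Matrix ι ι 𝕜} {lam : 𝕜 → 𝕜} {lam' : 𝕜}
    {y : 𝕜 → ι → 𝕜} {y' : ι → 𝕜} {t₀ : 𝕜} {x : ι → 𝕜}
    (hM : ∀ i j, HasDerivAt (fun t => M t i j) (M' i j) t₀)
    (hlam : HasDerivAt lam lam' t₀)
    (hy : ∀ i, HasDerivAt (fun t => y t i) (y' i) t₀)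
    (heig : ∀ᶠ t in nhds t₀, M t *ᵥ y t = lam t • y t)
    (hleft : x ᵥ* M t₀ = lam t₀ • x) :
    lam' * (x ⬝ᵥ y t₀) = x ⬝ᵥ (M' *ᵥ y t₀) := by
  have hlhs := hasDerivAt_const_dotProduct x (hasDerivAt_mulVec_apply hM hy)
  have hrhs := hlam.mul (hasDerivAt_const_dotProduct x hy)
  have hpaired : (fun t => x ⬝ᵥ (M t *ᵥ y t)) =ᶠ[nhds t₀] fun t => lam t * (x ⬝ᵥ y t) := by
    filter_upwards [heig] with t ht
    rw [ht, dotProduct_smul, smul_eq_mul]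
  have hderiv := (hlhs.congr_of_eventuallyEq hpaired.symm).unique hrhs
  have hcross : x ⬝ᵥ (M t₀ *ᵥ y') = lam t₀ * (x ⬝ᵥ y') := by
    rw [dotProduct_mulVec, hleft, smul_dotProduct, smul_eq_mul]
  rw [dotProduct_add, hcross] at hderiv
  linear_combination -hderiv

theorem deriv_simple_eigenvalue_general
    {n : ℕ} (M : ℝ → Matrix (Fin n) (Fin n) ℝ) (M' : Matrix (Fin n) (Fin n) ℝ)
    (lam : ℝ → ℝ) (lam' : ℝ) (y : ℝ → Fin n → ℝ) (y' : Fin n → ℝ) (t₀ : ℝ)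
    (hM : ∀ i j, HasDerivAt (fun t => M t i j) (M' i j) t₀)
    (hlam : HasDerivAt lam lam' t₀)
    (hy : ∀ i, HasDerivAt (fun t => y t i) (y' i) t₀)
    (heig : ∀ᶠ t in nhds t₀, M t *ᵥ y t = lam t • y t)
    (x : Fin n → ℝ)
    (hleft : x ᵥ* M t₀ = lam t₀ • x)
    (hxy : x ⬝ᵥ y t₀ ≠ 0) :
    lam' = (x ⬝ᵥ (M' *ᵥ y t₀)) / (x ⬝ᵥ y t₀) :=
  eq_div_of_mul_eq hxy (eigenvalue_deriv_mul_dotProduct hM hlam hy heig hleft)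

/-- Derivative of a simple eigenvalue: if `M(t) y(t) = λ(t) y(t)` near `t₀`, `y(t₀) ≠ 0`,
`x` is a left eigenvector of `M(t₀)` for `λ(t₀)` with `xᵀ y(t₀) ≠ 0`, and `M`, `λ`, `y` are
differentiable at `t₀` (entrywise), then `λ'(t₀) = (xᵀ M'(t₀) y(t₀)) / (xᵀ y(t₀))`. -/
theorem deriv_simple_eigenvalue
    {n : ℕ} (M : ℝ → Matrix (Fin n) (Fin n) ℝ) (M' : Matrix (Fin n) (Fin n) ℝ)
    (lam : ℝ → ℝ) (lam' : ℝ) (y : ℝ → Fin n → ℝ) (y' : Fin n → ℝ) (t₀ : ℝ)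
    (hM : ∀ i j, HasDerivAt (fun t => M t i j) (M' i j) t₀)
    (hlam : HasDerivAt lam lam' t₀)
    (hy : ∀ i, HasDerivAt (fun t => y t i) (y' i) t₀)
    (heig : ∀ᶠ t in nhds t₀, M t *ᵥ y t = lam t • y t)
    (hy0 : y t₀ ≠ 0)
    (x : Fin n → ℝ)
    (hleft : x ᵥ* M t₀ = lam t₀ • x)
    (hxy : x ⬝ᵥ y t₀ ≠ 0) :
    lam' = (x ⬝ᵥ (M' *ᵥ y t₀)) / (x ⬝ᵥ y t₀) :=
  deriv_simple_eigenvalue_general M M' lam lam' y y' t₀ hM hlam hy heig x hleft hxy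
end

section
/- Let M be a real n×n matrix, and let x, y ∈ ℝⁿ be vectors of unit Euclidean norm with xᵀy > 0, such that My = 0, xᵀM = 0, the kernel of M is the span of y, and the kernel of Mᵀ is the span of x. Let M# be a group inverse of M (i.e., MM# = M#M, M#MM# = M#, MM#M = M), and let M† be the Moore–Penrose pseudoinverse of M (i.e., MM†M = M, M†MM† = M†, (MM†)ᵀ = MM†, (M†M)ᵀ = M†M). With κ = 1/(xᵀy) and the projection Π = I − κ y xᵀ, one has M# = Π M† Π. -/
/-!
Since `M# M M# = M#`, `M M† M = M` and `M M# = M# M`, one has `M# = (M M#) M† (M M#)`,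
so it suffices to show `M M# = Π`. Both `E = M M#` and `Π` satisfy
`E M = M` and `E y = 0`; the rows of their difference are then left null vectors of `M`,
hence multiples of `x`, and they are killed by `y` although `xᵀy ≠ 0`, so they vanish.
-/

open Matrix

theorem groupInverse_eq_mul_innerInverse_mul {S : Type*} [Semigroup S] {a g b : S}
    (hcomm : a * g = g * a) (hg : g * a * g = g) (hb : a * b * a = a) :
    g = a * g * b * (a * g) :=
  calc g = g * a * g := hg.symm
    _ = g * (a * b * a) * g := by rw [hb]
    _ = g * a * b * (a * g) := by simp only [mul_assoc]
    _ = a * g * b * (a * g) := by rw [← hcomm]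

namespace Matrix

variable {ι K : Type*} [Fintype ι]

theorem eq_zero_of_mul_eq_zero_of_mulVec_eq_zero [CommRing K] [NoZeroDivisors K]
    {A M : Matrix ι ι K} {x y : ι → K} (hxy : x ⬝ᵥ y ≠ 0)
    (hker : ∀ z, z ᵥ* M = 0 → ∃ c : K, z = c • x) (hAM : A * M = 0) (hAy : A *ᵥ y = 0) :
    A = 0 := by
  ext i j
  obtain ⟨c, hc⟩ := hker (A i) (congrFun hAM i)
  have hcxy : c * (x ⬝ᵥ y) = 0 := by
    rw [← smul_eq_mul, ← smul_dotProduct, ← hc]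
    exact congrFun hAy i
  simp [hc, (mul_eq_zero.mp hcxy).resolve_right hxy]

variable [Field K] [DecidableEq ι]

def obliqueProj (x y : ι → K) : Matrix ι ι K :=
  1 - (1 / (x ⬝ᵥ y)) • vecMulVec y x

theorem obliqueProj_mulVec_right {x y : ι → K} (hxy : x ⬝ᵥ y ≠ 0) :
    obliqueProj x y *ᵥ y = 0 := by
  rw [obliqueProj, sub_mulVec, one_mulVec, smul_mulVec, vecMulVec_mulVec]
  simp [smul_smul, hxy]

theorem obliqueProj_mul_of_vecMul_eq_zero {x y : ι → K} {M : Matrix ι ι K} (hxM : x ᵥ* M = 0) :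
    obliqueProj x y * M = M := by
  rw [obliqueProj, sub_mul, one_mul, smul_mul, vecMulVec_mul, hxM, vecMulVec_zero, smul_zero,
    sub_zero]

theorem eq_obliqueProj {E M : Matrix ι ι K} {x y : ι → K} (hxy : x ⬝ᵥ y ≠ 0)
    (hxM : x ᵥ* M = 0) (hker : ∀ z, z ᵥ* M = 0 → ∃ c : K, z = c • x)
    (hEM : E * M = M) (hEy : E *ᵥ y = 0) :
    E = obliqueProj x y := by
  refine sub_eq_zero.mp (eq_zero_of_mul_eq_zero_of_mulVec_eq_zero hxy hker ?_ ?_)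
  · rw [sub_mul, hEM, obliqueProj_mul_of_vecMul_eq_zero hxM, sub_self]
  · rw [sub_mulVec, hEy, obliqueProj_mulVec_right hxy, sub_self]

end Matrix

theorem groupInverse_eq_proj_pinv_proj_general
    {n : ℕ} (M Mgi Mpi : Matrix (Fin n) (Fin n) ℝ) (x y : Fin n → ℝ)
    (hxy : 0 < x ⬝ᵥ y)
    (hMy : M *ᵥ y = 0) (hxM : x ᵥ* M = 0)
    (hkerMT : {z : Fin n → ℝ | Mᵀ *ᵥ z = 0} = {z | ∃ c : ℝ, z = c • x})
    (hgi1 : M * Mgi = Mgi * M) (hgi2 : Mgi * M * Mgi = Mgi) (hgi3 : M * Mgi * M = M)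
    (hp1 : M * Mpi * M = M) :
    Mgi = (1 - (1 / (x ⬝ᵥ y)) • vecMulVec y x) * Mpi * (1 - (1 / (x ⬝ᵥ y)) • vecMulVec y x) := by
  have hker (z : Fin n → ℝ) (hz : z ᵥ* M = 0) : ∃ c : ℝ, z = c • x := by
    rw [← mulVec_transpose] at hz
    exact hkerMT.subset hz
  have hproj : M * Mgi = obliqueProj x y := by
    refine eq_obliqueProj hxy.ne' hxM hker hgi3 ?_
    rw [hgi1, ← mulVec_mulVec, hMy, mulVec_zero]
  rw [← obliqueProj, ← hproj]
  exact groupInverse_eq_mul_innerInverse_mul hgi1 hgi2 hp1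

/-- Relation between the group inverse and the Moore–Penrose pseudoinverse:
if `M y = 0`, `xᵀ M = 0`, `x, y` have unit Euclidean norm with `xᵀy > 0`,
`ker M = span y` and `ker Mᵀ = span x`, then with `κ = 1/(xᵀy)` and
`Π = I − κ y xᵀ` one has `M# = Π M† Π`. -/
theorem groupInverse_eq_proj_pinv_proj
    {n : ℕ} (M Mgi Mpi : Matrix (Fin n) (Fin n) ℝ) (x y : Fin n → ℝ)
    (hxnorm : Real.sqrt (∑ i, x i ^ 2) = 1)
    (hynorm : Real.sqrt (∑ i, y i ^ 2) = 1)
    (hxy : 0 < x ⬝ᵥ y)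
    (hMy : M *ᵥ y = 0) (hxM : x ᵥ* M = 0)
    (hkerM : {z : Fin n → ℝ | M *ᵥ z = 0} = {z | ∃ c : ℝ, z = c • y})
    (hkerMT : {z : Fin n → ℝ | Mᵀ *ᵥ z = 0} = {z | ∃ c : ℝ, z = c • x})
    (hgi1 : M * Mgi = Mgi * M) (hgi2 : Mgi * M * Mgi = Mgi) (hgi3 : M * Mgi * M = M)
    (hp1 : M * Mpi * M = M) (hp2 : Mpi * M * Mpi = Mpi)
    (hp3 : (M * Mpi)ᵀ = M * Mpi) (hp4 : (Mpi * M)ᵀ = Mpi * M) :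
    Mgi = (1 - (1 / (x ⬝ᵥ y)) • vecMulVec y x) * Mpi * (1 - (1 / (x ⬝ᵥ y)) • vecMulVec y x) :=
  groupInverse_eq_proj_pinv_proj_general M Mgi Mpi x y hxy hMy hxM hkerMT hgi1 hgi2 hgi3 hp1
end

section
/- Let A ∈ ℝ^{n×n}, ε > 0, and let E : I → ℝ^{n×n} be differentiable on an open interval I. Let λ : I → ℝ and let v : I → ℝⁿ be differentiable with ‖v(t)‖₂ = 1 and (A + εE(t)) v(t) = λ(t) v(t) for all t ∈ I. Suppose for each t, A#(t) is a group inverse of A + εE(t) − λ(t)I and the eigenvector derivative formula v̇(t) = ε( −A#(t) Ė(t) v(t) + ( v(t)ᵀ A#(t) Ė(t) v(t) ) v(t) ) holds. Fix m distinct indices i₁, …, i_m in {1,…,n}; write ⟨v⟩_m = (1/m) Σ_{j=1}^m v_{i_j}, let u_i denote the i-th standard basis vector and ū = (1/m) Σ_{j=1}^m u_{i_j}, and define F(t) = (1/2) Σ_{k=1}^m ( v_{i_k}(t) − ⟨v(t)⟩_m )². Then F is differentiable with d/dt F(t) = ε ⟨R(t), Ė(t)⟩, where R = Σ_{k=1}^m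 ( v_{i_k} − ⟨v⟩_m ) [ ( v_{i_k} − ⟨v⟩_m ) (A#)ᵀ v vᵀ − (A#)ᵀ ( u_{i_k} − ū ) vᵀ ]. Moreover, if Ė(t) is supported on an edge set ℰ ⊆ {1,…,n}×{1,…,n} (i.e., Ė(t)_{ij} = 0 for all (i,j) ∉ ℰ), then d/dt F(t) = ε ⟨ P_ℰ(R(t)), Ė(t) ⟩, where P_ℰ is the orthogonal projection that sets to zero all entries of a matrix outside ℰ. -/
open Matrix

/-- Orthogonal projection onto matrices supported on an edge set `Ed`. -/
def projPattern {n : ℕ} (Ed : Set (Fin n × Fin n)) [DecidablePred (· ∈ Ed)]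
    (B : Matrix (Fin n) (Fin n) ℝ) : Matrix (Fin n) (Fin n) ℝ :=
  Matrix.of fun i j => if (i, j) ∈ Ed then B i j else 0

/-- The Frobenius inner product `⟨X, Y⟩ = trace(Xᵀ Y)`. -/
def frobInner {n : ℕ} (X Y : Matrix (Fin n) (Fin n) ℝ) : ℝ :=
  Matrix.trace (Xᵀ * Y)

/-!
With `d_k = u_{i_k} - ū` we have `v_{i_k} - ⟨v⟩_m = ⟨d_k, v⟩`, so `F = ½ Σ_k ⟨d_k, v⟩²` and
`Ḟ = Σ_k ⟨d_k, v⟩ ⟨d_k, v̇⟩`. Substituting the eigenvector-derivative formula for `v̇` and using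
`⟨a bᵀ, M⟩ = aᵀ M b` together with `⟨(A#)ᵀ a, M v⟩ = aᵀ A# M v` rewrites each summand as a Frobenius
pairing with `Ė`, which sums to `ε ⟨R, Ė⟩`. Finally `⟨P_ℰ R, Ė⟩ = ⟨R, Ė⟩` when `Ė` vanishes off `ℰ`.
-/

section Frobenius

variable {n : ℕ}

lemma frobInner_sub (X X' Y : Matrix (Fin n) (Fin n) ℝ) :
    frobInner (X - X') Y = frobInner X Y - frobInner X' Y := by
  simp only [frobInner, transpose_sub, Matrix.sub_mul, trace_sub]

lemma frobInner_smul (c : ℝ) (X Y : Matrix (Fin n) (Fin n) ℝ) :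
    frobInner (c • X) Y = c * frobInner X Y := by
  simp only [frobInner, transpose_smul, Matrix.smul_mul, trace_smul, smul_eq_mul]

lemma frobInner_sum {ι : Type*} (s : Finset ι) (X : ι → Matrix (Fin n) (Fin n) ℝ)
    (Y : Matrix (Fin n) (Fin n) ℝ) :
    frobInner (∑ k ∈ s, X k) Y = ∑ k ∈ s, frobInner (X k) Y := by
  simp only [frobInner, transpose_sum, Matrix.sum_mul, trace_sum]

lemma frobInner_vecMulVec (a b : Fin n → ℝ) (M : Matrix (Fin n) (Fin n) ℝ) :
    frobInner (vecMulVec a b) M = a ⬝ᵥ M *ᵥ b := by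
  rw [frobInner, transpose_vecMulVec, vecMulVec_mul, trace_vecMulVec, dotProduct_comm,
    ← dotProduct_mulVec]

lemma frobInner_projPattern_of_support (Ed : Set (Fin n × Fin n)) [DecidablePred (· ∈ Ed)]
    (X Y : Matrix (Fin n) (Fin n) ℝ) (hY : ∀ i j, (i, j) ∉ Ed → Y i j = 0) :
    frobInner (projPattern Ed X) Y = frobInner X Y := by
  simp only [frobInner, trace, diag, mul_apply, transpose_apply, projPattern, of_apply]
  refine Finset.sum_congr rfl fun i _ => Finset.sum_congr rfl fun j _ => ?_
  by_cases h : (j, i) ∈ Ed <;> simp [h, hY j i]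

end Frobenius

lemma HasDerivAt.const_dotProduct {ι : Type*} [Fintype ι] {v : ℝ → ι → ℝ} {v' : ι → ℝ} {t : ℝ}
    (hv : HasDerivAt v v' t) (d : ι → ℝ) :
    HasDerivAt (fun s => d ⬝ᵥ v s) (d ⬝ᵥ v') t :=
  HasDerivAt.fun_sum fun i _ => (hasDerivAt_pi.1 hv i).const_mul (d i)

lemma HasDerivAt.half_sum_sq_dotProduct {ι κ : Type*} [Fintype ι] [Fintype κ]
    {v : ℝ → ι → ℝ} {v' : ι → ℝ} {t : ℝ}
    (hv : HasDerivAt v v' t) (d : κ → ι → ℝ) :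
    HasDerivAt (fun s => 1 / 2 * ∑ k, (d k ⬝ᵥ v s) ^ 2)
      (∑ k, (d k ⬝ᵥ v t) * (d k ⬝ᵥ v')) t := by
  refine ((HasDerivAt.fun_sum (u := Finset.univ) fun k _ =>
    (hv.const_dotProduct (d k)).fun_pow 2).const_mul (1 / 2 : ℝ)).congr_deriv ?_
  rw [Finset.mul_sum]
  refine Finset.sum_congr rfl fun k _ => ?_
  norm_num
  ring

/-- The vector `u_{i_k} - ū` of the paper: `centeredSingle idx k ⬝ᵥ x = x_{i_k} - ⟨x⟩_m`. -/
noncomputable def centeredSingle {n m : ℕ} (idx : Fin m → Fin n) (k : Fin m) : Fin n → ℝ :=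
  (Pi.single (idx k) 1 : Fin n → ℝ) - (1 / (m : ℝ)) • ∑ j, (Pi.single (idx j) 1 : Fin n → ℝ)

lemma centeredSingle_dotProduct {n m : ℕ} (idx : Fin m → Fin n) (k : Fin m) (x : Fin n → ℝ) :
    centeredSingle idx k ⬝ᵥ x = x (idx k) - 1 / (m : ℝ) * ∑ j, x (idx j) := by
  simp [centeredSingle, sub_dotProduct, sum_dotProduct]

/-- The matrix `R` of the paper, for a group inverse `G`, an eigenvector `x` and the family of
vectors `d k = u_{i_k} - ū`. -/
def dispersionGradient {n : ℕ} {κ : Type*} [Fintype κ] (G : Matrix (Fin n) (Fin n) ℝ)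
    (x : Fin n → ℝ) (d : κ → Fin n → ℝ) : Matrix (Fin n) (Fin n) ℝ :=
  ∑ k, (d k ⬝ᵥ x) • ((d k ⬝ᵥ x) • vecMulVec (Gᵀ *ᵥ x) x - vecMulVec (Gᵀ *ᵥ d k) x)

/-- The right-hand side is `Σ_k c_k ⟨d k, ẋ⟩` for `ẋ` given by the eigenvector-derivative
formula, with `c_k = ⟨d k, x⟩`. -/
lemma frobInner_dispersionGradient {n : ℕ} {κ : Type*} [Fintype κ]
    (G M : Matrix (Fin n) (Fin n) ℝ) (x : Fin n → ℝ) (d : κ → Fin n → ℝ) (ε : ℝ) :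
    ε * frobInner (dispersionGradient G x d) M
      = ∑ k, (d k ⬝ᵥ x) * (d k ⬝ᵥ ε • (-(G *ᵥ M *ᵥ x) + (x ⬝ᵥ G *ᵥ M *ᵥ x) • x)) := by
  have hG : ∀ a, frobInner (vecMulVec (Gᵀ *ᵥ a) x) M = a ⬝ᵥ G *ᵥ M *ᵥ x := fun a => by
    rw [frobInner_vecMulVec, mulVec_transpose, ← dotProduct_mulVec]
  simp only [dispersionGradient, frobInner_sum, Finset.mul_sum, frobInner_smul, frobInner_sub,
    hG, dotProduct_smul, dotProduct_add, dotProduct_neg, smul_eq_mul]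
  refine Finset.sum_congr rfl fun k _ => ?_
  ring

theorem deriv_dispersion_functional_directed_general
    {n m : ℕ} (ε : ℝ)
    (I : Set ℝ)
    (E' : ℝ → Matrix (Fin n) (Fin n) ℝ)
    (v v' : ℝ → Fin n → ℝ)
    (Agi : ℝ → Matrix (Fin n) (Fin n) ℝ)
    (hv : ∀ t ∈ I, ∀ i, HasDerivAt (fun s => v s i) (v' t i) t)
    (hvder : ∀ t ∈ I, v' t
      = ε • (-(Agi t *ᵥ (E' t *ᵥ v t)) + (v t ⬝ᵥ (Agi t *ᵥ (E' t *ᵥ v t))) • v t))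
    (idx : Fin m → Fin n)
    (F : ℝ → ℝ)
    (hF : F = fun t => (1 / 2) * ∑ k, (v t (idx k) - (1 / (m : ℝ)) * ∑ j, v t (idx j)) ^ 2)
    (R : ℝ → Matrix (Fin n) (Fin n) ℝ)
    (hR : ∀ t, R t = ∑ k, (v t (idx k) - (1 / (m : ℝ)) * ∑ j, v t (idx j)) •
      ((v t (idx k) - (1 / (m : ℝ)) * ∑ j, v t (idx j)) • vecMulVec ((Agi t)ᵀ *ᵥ v t) (v t)
        - vecMulVec
            ((Agi t)ᵀ *ᵥ ((Pi.single (idx k) 1 : Fin n → ℝ) - (1 / (m : ℝ)) • ∑ j, (Pi.single (idx j) 1 : Fin n → ℝ)))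
            (v t))) :
    (∀ t ∈ I, HasDerivAt F (ε * frobInner (R t) (E' t)) t) ∧
    (∀ (Ed : Set (Fin n × Fin n)) [DecidablePred (· ∈ Ed)], ∀ t ∈ I,
      (∀ i j, (i, j) ∉ Ed → E' t i j = 0) →
      HasDerivAt F (ε * frobInner (projPattern Ed (R t)) (E' t)) t) := by
  have hF' : F = fun t => 1 / 2 * ∑ k, (centeredSingle idx k ⬝ᵥ v t) ^ 2 := by
    simp only [hF, centeredSingle_dotProduct]
  have hR' : ∀ t, R t = dispersionGradient (Agi t) (v t) (centeredSingle idx) := fun t => by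
    simp only [hR, dispersionGradient, centeredSingle_dotProduct]
    rfl
  have hderiv : ∀ t ∈ I, HasDerivAt F (ε * frobInner (R t) (E' t)) t := fun t ht => by
    rw [hF', hR', frobInner_dispersionGradient, ← hvder t ht]
    exact (hasDerivAt_pi.2 (hv t ht)).half_sum_sq_dotProduct _
  refine ⟨hderiv, fun Ed _ t ht hsupp => ?_⟩
  rw [frobInner_projPattern_of_support Ed (R t) (E' t) hsupp]
  exact hderiv t ht

/-- Structured gradient of the dispersion functional (directed graphs):
with `v(t)` the unit Perron eigenvector of `A + εE(t)`, `A#(t)` a group inverse of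
`A + εE(t) − λ(t)I`, and the eigenvector-derivative formula holding,
the functional `F(t) = ½ Σ_k ( v_{i_k}(t) − ⟨v(t)⟩_m )²` satisfies
`Ḟ(t) = ε ⟨R(t), Ė(t)⟩`, and, if `Ė(t)` is supported on an edge set `ℰ`,
`Ḟ(t) = ε ⟨P_ℰ(R(t)), Ė(t)⟩`. -/
theorem deriv_dispersion_functional_directed
    {n m : ℕ} (A : Matrix (Fin n) (Fin n) ℝ) (ε : ℝ) (hε : 0 < ε)
    (I : Set ℝ) (hI : IsOpen I)
    (E E' : ℝ → Matrix (Fin n) (Fin n) ℝ)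
    (lam : ℝ → ℝ) (v v' : ℝ → Fin n → ℝ)
    (Agi : ℝ → Matrix (Fin n) (Fin n) ℝ)
    (hE : ∀ t ∈ I, ∀ i j, HasDerivAt (fun s => E s i j) (E' t i j) t)
    (hv : ∀ t ∈ I, ∀ i, HasDerivAt (fun s => v s i) (v' t i) t)
    (hnorm : ∀ t ∈ I, Real.sqrt (∑ i, v t i ^ 2) = 1)
    (heig : ∀ t ∈ I, (A + ε • E t) *ᵥ v t = lam t • v t)
    (hgi : ∀ t ∈ I,
      (A + ε • E t - lam t • 1) * Agi t = Agi t * (A + ε • E t - lam t • 1) ∧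
      Agi t * (A + ε • E t - lam t • 1) * Agi t = Agi t ∧
      (A + ε • E t - lam t • 1) * Agi t * (A + ε • E t - lam t • 1)
        = A + ε • E t - lam t • 1)
    (hvder : ∀ t ∈ I, v' t
      = ε • (-(Agi t *ᵥ (E' t *ᵥ v t)) + (v t ⬝ᵥ (Agi t *ᵥ (E' t *ᵥ v t))) • v t))
    (idx : Fin m → Fin n) (hidx : Function.Injective idx)
    (F : ℝ → ℝ)
    (hF : F = fun t => (1 / 2) * ∑ k, (v t (idx k) - (1 / (m : ℝ)) * ∑ j, v t (idx j)) ^ 2)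
    (R : ℝ → Matrix (Fin n) (Fin n) ℝ)
    (hR : ∀ t, R t = ∑ k, (v t (idx k) - (1 / (m : ℝ)) * ∑ j, v t (idx j)) •
      ((v t (idx k) - (1 / (m : ℝ)) * ∑ j, v t (idx j)) • vecMulVec ((Agi t)ᵀ *ᵥ v t) (v t)
        - vecMulVec
            ((Agi t)ᵀ *ᵥ ((Pi.single (idx k) 1 : Fin n → ℝ) - (1 / (m : ℝ)) • ∑ j, (Pi.single (idx j) 1 : Fin n → ℝ)))
            (v t))) :
    (∀ t ∈ I, HasDerivAt F (ε * frobInner (R t) (E' t)) t) ∧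
    (∀ (Ed : Set (Fin n × Fin n)) [DecidablePred (· ∈ Ed)], ∀ t ∈ I,
      (∀ i j, (i, j) ∉ Ed → E' t i j = 0) →
      HasDerivAt F (ε * frobInner (projPattern Ed (R t)) (E' t)) t) :=
  deriv_dispersion_functional_directed_general ε I E' v v' Agi hv hvder idx F hF R hR
end

section
/- Let M be a symmetric real n×n matrix and let v ∈ ℝⁿ be a nonzero vector such that the kernel of M equals the span of v. Then the (n+1)×(n+1) block matrix [[M, v], [vᵀ, 0]] is invertible. More generally, for symmetric M with Mv = 0 and v ≠ 0, the block matrix [[M, v], [vᵀ, 0]] is invertible if and only if the orthogonal complement of v intersects the kernel of M trivially. -/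
/-!
A kernel vector `(z, t)` of `[[M, v], [vᵀ, 0]]` satisfies `M z + t v = 0` and `v ⬝ᵥ z = 0`.
Pairing the first equation with `v` and using `v ⬝ᵥ M z = (M v) ⬝ᵥ z = 0` (symmetry of `M`)
leaves `t (v ⬝ᵥ v) = 0`, so `t = 0` and `z ∈ v^⊥ ∩ ker M`; conversely every such `z` gives the
kernel vector `(z, 0)`. When `ker M = span v`, an element `c v` of `v^⊥` has `c (v ⬝ᵥ v) = 0`.
-/

open Matrix

/-- The bordered matrix `[[M, v], [vᵀ, 0]]`. -/
def borderedMatrix {n : ℕ} (M : Matrix (Fin n) (Fin n) ℝ) (v : Fin n → ℝ) :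
    Matrix (Fin n ⊕ Unit) (Fin n ⊕ Unit) ℝ :=
  Matrix.fromBlocks M (Matrix.of fun i _ => v i) (Matrix.of fun _ j => v j) 0

namespace Matrix

theorem isUnit_iff_forall_mulVec_eq_zero {m K : Type*} [Fintype m] [DecidableEq m] [Field K]
    (A : Matrix m m K) : IsUnit A ↔ ∀ w, A *ᵥ w = 0 → w = 0 := by
  rw [isUnit_iff_isUnit_det, isUnit_iff_ne_zero, ne_eq, ← exists_mulVec_eq_zero_iff]
  grind

theorem IsSymm.dotProduct_mulVec_eq_zero {m R : Type*} [Fintype m] [CommSemiring R]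
    {M : Matrix m m R} (hM : M.IsSymm) {v : m → R} (hMv : M *ᵥ v = 0) (z : m → R) :
    v ⬝ᵥ (M *ᵥ z) = 0 := by
  rw [dotProduct_mulVec, ← mulVec_transpose, hM.eq, hMv, zero_dotProduct]

end Matrix

section borderedMatrix

variable {n : ℕ} (M : Matrix (Fin n) (Fin n) ℝ) (v : Fin n → ℝ)

theorem borderedMatrix_mulVec (w : Fin n ⊕ Unit → ℝ) :
    borderedMatrix M v *ᵥ w =
      Sum.elim (M *ᵥ (w ∘ Sum.inl) + w (Sum.inr ()) • v) (fun _ => v ⬝ᵥ (w ∘ Sum.inl)) := by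
  ext (i | _) <;> simp [borderedMatrix, mulVec, dotProduct, mul_comm]

theorem borderedMatrix_mulVec_eq_zero_iff (w : Fin n ⊕ Unit → ℝ) :
    borderedMatrix M v *ᵥ w = 0 ↔
      M *ᵥ (w ∘ Sum.inl) + w (Sum.inr ()) • v = 0 ∧ v ⬝ᵥ (w ∘ Sum.inl) = 0 := by
  rw [borderedMatrix_mulVec, ← Sum.elim_zero_zero, Sum.elim_eq_iff]
  exact and_congr_right' ⟨fun h => congrFun h (), fun h => funext fun _ => h⟩

theorem isUnit_borderedMatrix_iff {M : Matrix (Fin n) (Fin n) ℝ} (hM : M.IsSymm)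
    {v : Fin n → ℝ} (hv : v ≠ 0) (hMv : M *ᵥ v = 0) :
    IsUnit (borderedMatrix M v) ↔ ∀ z : Fin n → ℝ, v ⬝ᵥ z = 0 → M *ᵥ z = 0 → z = 0 := by
  rw [isUnit_iff_forall_mulVec_eq_zero]
  constructor
  · intro h z hvz hMz
    have hw := h (Sum.elim z 0) <|
      (borderedMatrix_mulVec_eq_zero_iff M v _).2 ⟨by simpa using hMz, hvz⟩
    exact (Sum.elim_eq_iff.1 (hw.trans Sum.elim_zero_zero.symm)).1
  · intro h w hw
    obtain ⟨hMz, hvz⟩ := (borderedMatrix_mulVec_eq_zero_iff M v w).1 hw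
    have ht : w (Sum.inr ()) = 0 := by
      have := congrArg (v ⬝ᵥ ·) hMz
      simp only [dotProduct_add, dotProduct_smul, hM.dotProduct_mulVec_eq_zero hMv, zero_add,
        smul_eq_mul, dotProduct_zero, mul_eq_zero, dotProduct_self_eq_zero] at this
      exact this.resolve_right hv
    have hz : w ∘ Sum.inl = 0 := h _ hvz (by simpa [ht] using hMz)
    ext (i | _)
    · exact congrFun hz i
    · exact ht

end borderedMatrix

/-- Invertibility of the bordered matrix `[[M, v], [vᵀ, 0]]` for symmetric `M` and `v ≠ 0`:
if `ker M = span v` then it is invertible; and, when `Mv = 0`, it is invertible if and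
only if the orthogonal complement of `v` intersects the kernel of `M` trivially. -/
theorem borderedMatrix_invertible
    {n : ℕ} (M : Matrix (Fin n) (Fin n) ℝ) (hM : M.IsSymm)
    (v : Fin n → ℝ) (hv : v ≠ 0) :
    (({z : Fin n → ℝ | M *ᵥ z = 0} = {z | ∃ c : ℝ, z = c • v}) →
      IsUnit (borderedMatrix M v)) ∧
    (M *ᵥ v = 0 →
      (IsUnit (borderedMatrix M v) ↔
        ∀ z : Fin n → ℝ, v ⬝ᵥ z = 0 → M *ᵥ z = 0 → z = 0)) := by
  refine ⟨fun hker => ?_, isUnit_borderedMatrix_iff hM hv⟩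
  have hMv : M *ᵥ v = 0 := by
    change v ∈ {z | M *ᵥ z = 0}
    exact hker ▸ ⟨1, (one_smul ℝ v).symm⟩
  refine (isUnit_borderedMatrix_iff hM hv hMv).2 fun z hvz hMz => ?_
  obtain ⟨c, rfl⟩ : ∃ c : ℝ, z = c • v := by
    change z ∈ {z | ∃ c : ℝ, z = c • v}
    exact hker ▸ hMz
  simpa [hv, dotProduct_smul] using hvz
end
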